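/- For every δ ∈ [0, 1/2] and every f: {0,1}^n → {0,1}: 1/2 + (1/2)·NS_{1−2δ}(f) ≤ ExpBias_{2δ}(f) ≤ 1/2 + (1/2)·√(NS_{1−2δ}(f)). -/

import Mathlib

/-!
If `ρ` is a random restriction at rate `1 - η` and `y, y'` are independent uniform fillings of
its free coordinates, then the two filled inputs form an `η`-correlated pair: coordinatewise,
both constructions give probability `(1 + η)/4` to each agreeing pair of bits and `(1 - η)/4`
to each disagreeing one. Writing `q_ρ = 2 Pr[f_ρ = 1] - 1`, this gives
`NS_η(f) = E_ρ[q_ρ²]`, while `ExpBias_{1-η}(f) = 1/2 + E_ρ|q_ρ|/2` because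
`max(p, 1 - p) = 1/2 + |2p - 1|/2`. As `|q_ρ| ≤ 1`, `q_ρ² ≤ |q_ρ|` gives the lower bound, and
Jensen's inequality `E|q| ≤ √(E q²)` the upper one.
-/

/-- Noise stability `NS_η(f) = 1 - 2 Pr[f(x) ≠ f(y)]` where `x` is uniform and `y` is
`η`-correlated with `x`: here `z` records which coordinates are flipped, each coordinate
being flipped independently with probability `(1 - η)/2`. -/
noncomputable def noiseStability {n : ℕ} (η : ℝ) (f : (Fin n → Bool) → Bool) : ℝ :=
  1 - 2 * ∑ x : Fin n → Bool, ∑ z : Fin n → Bool,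
      ((2 ^ n : ℝ))⁻¹ * (∏ i : Fin n, if z i then (1 - η) / 2 else (1 + η) / 2) *
        (if f x ≠ f (fun i => xor (x i) (z i)) then 1 else 0)

/-- The probability that a random restriction `ρ` (each coordinate independently left
free with probability `δ`, else set to `0` or `1` each with probability `(1-δ)/2`)
equals the given restriction `ρ : Fin n → Option Bool` (`none` = free). -/
noncomputable def restrictionWeight {n : ℕ} (δ : ℝ) (ρ : Fin n → Option Bool) : ℝ :=
  ∏ i : Fin n, (match ρ i with | none => δ | some _ => (1 - δ) / 2)

/-- `bias(f_ρ) = max (Pr[f_ρ = 1], Pr[f_ρ = 0])` where the probability is over a uniform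
assignment of the free coordinates of the restriction `ρ` (filling all coordinates
uniformly and overriding the fixed ones gives the same distribution). -/
noncomputable def restrictedBias {n : ℕ} (ρ : Fin n → Option Bool) (f : (Fin n → Bool) → Bool) : ℝ :=
  max (((Finset.univ.filter (fun y : Fin n → Bool =>
          f (fun i => (ρ i).getD (y i)) = true)).card : ℝ) / 2 ^ n)
      (((Finset.univ.filter (fun y : Fin n → Bool =>
          f (fun i => (ρ i).getD (y i)) = false)).card : ℝ) / 2 ^ n)

/-- `ExpBias_δ(f) = E_ρ[bias(f_ρ)]` over a random restriction `ρ` at rate `δ`. -/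
noncomputable def expBias {n : ℕ} (δ : ℝ) (f : (Fin n → Bool) → Bool) : ℝ :=
  ∑ ρ : Fin n → Option Bool, restrictionWeight δ ρ * restrictedBias ρ f

open Finset

section WeightedSums

variable {ι : Type*} [Fintype ι] [DecidableEq ι]

theorem Fintype.sum_sum_eq_sum_pi_prod {α β M : Type*} [Fintype α] [Fintype β]
    [AddCommMonoid M] (h : (ι → α) → (ι → β) → M) :
    ∑ x, ∑ z, h x z = ∑ s : ι → α × β, h (Prod.fst ∘ s) (Prod.snd ∘ s) := by
  rw [← Fintype.sum_prod_type']
  exact Fintype.sum_equiv (Equiv.arrowProdEquivProdArrow ι _ _).symm _ _ fun _ => rfl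

theorem Fintype.sum_prod_mul_comp_eq_of_sum_fiber {A B M : Type*} [Fintype A] [Fintype B]
    [DecidableEq B] [CommSemiring M] (ψ : A → B) (t : A → M) (m : B → M)
    (hm : ∀ b, ∑ a with ψ a = b, t a = m b) (F : (ι → B) → M) :
    ∑ s : ι → A, (∏ i, t (s i)) * F (ψ ∘ s) = ∑ g : ι → B, (∏ i, m (g i)) * F g := by
  have hfiber : ∀ g : ι → B, ∏ i, m (g i) = ∑ s with ψ ∘ s = g, ∏ i, t (s i) := by
    intro g
    simp_rw [← hm, Finset.prod_univ_sum]
    congr 1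
    ext s
    simp [Fintype.mem_piFinset, funext_iff]
  simp_rw [hfiber, Finset.sum_mul]
  rw [← Finset.sum_fiberwise univ (ψ ∘ ·)]
  refine Finset.sum_congr rfl fun g _ => Finset.sum_congr rfl fun s hs => ?_
  rw [(Finset.mem_filter.mp hs).2]

end WeightedSums

theorem sum_mul_sq_le_sum_mul_abs {ι : Type*} (s : Finset ι) (w q : ι → ℝ)
    (hw : ∀ i ∈ s, 0 ≤ w i) (hq : ∀ i ∈ s, |q i| ≤ 1) :
    ∑ i ∈ s, w i * q i ^ 2 ≤ ∑ i ∈ s, w i * |q i| := by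
  refine Finset.sum_le_sum fun i hi => mul_le_mul_of_nonneg_left ?_ (hw i hi)
  rw [← sq_abs]
  nlinarith [abs_nonneg (q i), hq i hi]

theorem sum_mul_abs_le_sqrt_sum_mul_sq {ι : Type*} (s : Finset ι) (w q : ι → ℝ)
    (hw : ∀ i ∈ s, 0 ≤ w i) (hw₁ : ∑ i ∈ s, w i = 1) :
    ∑ i ∈ s, w i * |q i| ≤ √(∑ i ∈ s, w i * q i ^ 2) := by
  have jensen := (Even.convexOn_pow (𝕜 := ℝ) even_two).map_sum_le hw hw₁
    (p := fun i => |q i|) fun _ _ => Set.mem_univ _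
  simp only [smul_eq_mul, sq_abs] at jensen
  exact Real.le_sqrt_of_sq_le jensen

theorem max_self_one_sub (p : ℝ) : max p (1 - p) = 1 / 2 + |2 * p - 1| / 2 := by
  rcases le_total p (1 / 2) with h | h
  · rw [max_eq_right (by linarith), abs_of_nonpos (by linarith)]; ring
  · rw [max_eq_left (by linarith), abs_of_nonneg (by linarith)]; ring

section ProbTrue

variable {α : Type*} [Fintype α]

noncomputable def probTrue (g : α → Bool) : ℝ := (#{a | g a = true} : ℝ) / Fintype.card α

theorem card_filter_eq_false_div_card [Nonempty α] (g : α → Bool) :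
    (#{a | g a = false} : ℝ) / Fintype.card α = 1 - probTrue g := by
  have hcard := Finset.card_filter_add_card_filter_not (s := univ) (fun a => g a = true)
  simp only [Bool.not_eq_true, card_univ] at hcard
  have hpos : (0 : ℝ) < Fintype.card α := by exact_mod_cast Fintype.card_pos
  rw [probTrue, eq_sub_iff_add_eq, ← add_div, div_eq_one_iff_eq hpos.ne']
  exact_mod_cast (add_comm _ _).trans hcard

theorem abs_two_mul_probTrue_sub_one_le (g : α → Bool) : |2 * probTrue g - 1| ≤ 1 := by
  have h0 : 0 ≤ probTrue g := by unfold probTrue; positivity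
  have h1 : probTrue g ≤ 1 := div_le_one_of_le₀ (by exact_mod_cast card_le_univ _) (by positivity)
  rw [abs_le]
  constructor <;> linarith

theorem sum_sum_ite_ne_eq [Nonempty α] (g : α → Bool) :
    ∑ a, ∑ b, (if g a ≠ g b then (1 : ℝ) else 0)
      = 2 * Fintype.card α ^ 2 * (probTrue g * (1 - probTrue g)) := by
  have hrow : ∀ a, ∑ b, (if g a ≠ g b then (1 : ℝ) else 0)
      = if g a = true then (#{b | g b = false} : ℝ) else #{b | g b = true} := by
    intro a
    rw [Finset.sum_boole]
    cases g a
    · simp only [Bool.false_eq_true, if_false, ne_eq]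
      congr 3; ext b; cases g b <;> simp
    · simp only [if_true, ne_eq]
      congr 3; ext b; cases g b <;> simp
  have hcard : (Fintype.card α : ℝ) ≠ 0 := by exact_mod_cast Fintype.card_ne_zero
  simp_rw [hrow, Finset.sum_ite, Finset.sum_const, nsmul_eq_mul,
    ← card_filter_eq_false_div_card g, probTrue]
  field_simp
  simp only [Bool.not_eq_true]
  ring

end ProbTrue

section Coupling

variable {n : ℕ}

/-- The law of one coordinate `(x i, y i)` of an `η`-correlated pair. -/
noncomputable def noisyPairWeight (η : ℝ) (b : Bool × Bool) : ℝ :=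
  if b.1 = b.2 then (1 + η) / 4 else (1 - η) / 4

noncomputable def noisyDisagreement (η : ℝ) (f : (Fin n → Bool) → Bool) : ℝ :=
  ∑ g : Fin n → Bool × Bool, (∏ i, noisyPairWeight η (g i)) *
    if f (Prod.fst ∘ g) ≠ f (Prod.snd ∘ g) then 1 else 0

theorem noiseStability_eq_one_sub_two_mul_noisyDisagreement (η : ℝ)
    (f : (Fin n → Bool) → Bool) :
    noiseStability η f = 1 - 2 * noisyDisagreement η f := by
  have hfiber : ∀ b : Bool × Bool,
      ∑ a : Bool × Bool with (a.1, xor a.1 a.2) = b,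
        (1 / 2 * if a.2 then (1 - η) / 2 else (1 + η) / 2) = noisyPairWeight η b := by
    rintro ⟨_ | _, _ | _⟩ <;>
      simp [noisyPairWeight, Finset.sum_filter, Fintype.sum_prod_type] <;> ring
  rw [noiseStability, noisyDisagreement, Fintype.sum_sum_eq_sum_pi_prod,
    ← Fintype.sum_prod_mul_comp_eq_of_sum_fiber _ _ _ hfiber]
  congr 2
  refine Finset.sum_congr rfl fun s _ => ?_
  rw [Finset.prod_mul_distrib, Finset.prod_const, card_univ, Fintype.card_fin, one_div, inv_pow]
  rfl

noncomputable def restrictionCoordWeight (δ : ℝ) : Option Bool → ℝ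
  | none => δ
  | some _ => (1 - δ) / 2

theorem restrictionWeight_eq_prod (δ : ℝ) (ρ : Fin n → Option Bool) :
    restrictionWeight δ ρ = ∏ i, restrictionCoordWeight δ (ρ i) := rfl

theorem sum_restrictionWeight (δ : ℝ) : ∑ ρ : Fin n → Option Bool, restrictionWeight δ ρ = 1 := by
  simp_rw [restrictionWeight_eq_prod, ← Fintype.prod_sum, Fintype.sum_option, Fintype.sum_bool,
    restrictionCoordWeight]
  simp only [add_halves, add_sub_cancel, Finset.prod_const_one]

theorem restrictionWeight_nonneg {δ : ℝ} (h0 : 0 ≤ δ) (h1 : δ ≤ 1) (ρ : Fin n → Option Bool) :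
    0 ≤ restrictionWeight δ ρ :=
  Finset.prod_nonneg fun i _ => by
    cases ρ i
    · exact h0
    · exact div_nonneg (sub_nonneg.mpr h1) zero_le_two

def restrictedFun {ι : Type*} (ρ : ι → Option Bool) (f : (ι → Bool) → Bool) : (ι → Bool) → Bool :=
  fun y => f fun i => (ρ i).getD (y i)

theorem noisyDisagreement_eq_sum_restrictionWeight (η : ℝ) (f : (Fin n → Bool) → Bool) :
    noisyDisagreement η f = ∑ ρ, restrictionWeight (1 - η) ρ *
      (2 * (probTrue (restrictedFun ρ f) * (1 - probTrue (restrictedFun ρ f)))) := by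
  have hfiber : ∀ b : Bool × Bool,
      ∑ a : Option Bool × Bool × Bool with (a.1.getD a.2.1, a.1.getD a.2.2) = b,
        restrictionCoordWeight (1 - η) a.1 / 4 = noisyPairWeight η b := by
    rintro ⟨_ | _, _ | _⟩ <;>
      simp [noisyPairWeight, restrictionCoordWeight, Finset.sum_filter, Fintype.sum_prod_type,
        Fintype.sum_option] <;> ring
  rw [noisyDisagreement, ← Fintype.sum_prod_mul_comp_eq_of_sum_fiber _ _ _ hfiber]
  symm
  calc _ = ∑ ρ : Fin n → Option Bool, ∑ y : Fin n → Bool, ∑ y' : Fin n → Bool,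
        (∏ i, restrictionCoordWeight (1 - η) (ρ i) / 4) *
          if restrictedFun ρ f y ≠ restrictedFun ρ f y' then 1 else 0 := by
        refine Finset.sum_congr rfl fun ρ _ => ?_
        simp_rw [← Finset.mul_sum, sum_sum_ite_ne_eq, Finset.prod_div_distrib,
          ← restrictionWeight_eq_prod]
        simp only [Fintype.card_pi, Fintype.card_bool, Finset.prod_const, card_univ,
          Fintype.card_fin, Nat.cast_pow, Nat.cast_ofNat]
        rw [← pow_mul, pow_mul', show (2 : ℝ) ^ 2 = 4 by norm_num]
        field_simp
    _ = _ := by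
        simp_rw [Fintype.sum_sum_eq_sum_pi_prod]
        rfl

theorem restrictedBias_eq_max (ρ : Fin n → Option Bool) (f : (Fin n → Bool) → Bool) :
    restrictedBias ρ f
      = max (probTrue (restrictedFun ρ f)) (1 - probTrue (restrictedFun ρ f)) := by
  have hcard : (Fintype.card (Fin n → Bool) : ℝ) = 2 ^ n := by simp
  rw [← card_filter_eq_false_div_card, probTrue, hcard]
  rfl

theorem expBias_eq (δ : ℝ) (f : (Fin n → Bool) → Bool) :
    expBias δ f = 1 / 2 + 1 / 2 * ∑ ρ, restrictionWeight δ ρ *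
      |2 * probTrue (restrictedFun ρ f) - 1| := by
  simp_rw [expBias, restrictedBias_eq_max, max_self_one_sub, mul_add, Finset.sum_add_distrib,
    ← Finset.sum_mul, sum_restrictionWeight, Finset.mul_sum]
  ring_nf

theorem noiseStability_eq_sum (η : ℝ) (f : (Fin n → Bool) → Bool) :
    noiseStability η f = ∑ ρ, restrictionWeight (1 - η) ρ *
      (2 * probTrue (restrictedFun ρ f) - 1) ^ 2 := by
  rw [noiseStability_eq_one_sub_two_mul_noisyDisagreement,
    noisyDisagreement_eq_sum_restrictionWeight, Finset.mul_sum]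
  nth_rw 1 [← sum_restrictionWeight (n := n) (1 - η)]
  rw [← Finset.sum_sub_distrib]
  refine Finset.sum_congr rfl fun ρ _ => ?_
  ring

end Coupling

/-- For every `δ ∈ [0, 1/2]` and `f : {0,1}^n → {0,1}`,
`1/2 + NS_{1-2δ}(f)/2 ≤ ExpBias_{2δ}(f) ≤ 1/2 + √(NS_{1-2δ}(f))/2`. -/
theorem stmt13 {n : ℕ} (δ : ℝ) (h0 : 0 ≤ δ) (h1 : δ ≤ 1 / 2)
    (f : (Fin n → Bool) → Bool) :
    1 / 2 + (1 / 2) * noiseStability (1 - 2 * δ) f ≤ expBias (2 * δ) f ∧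
    expBias (2 * δ) f ≤ 1 / 2 + (1 / 2) * Real.sqrt (noiseStability (1 - 2 * δ) f) := by
  have hw : ∀ ρ ∈ (univ : Finset (Fin n → Option Bool)), 0 ≤ restrictionWeight (2 * δ) ρ :=
    fun ρ _ => restrictionWeight_nonneg (by linarith) (by linarith) ρ
  rw [expBias_eq, noiseStability_eq_sum, sub_sub_cancel]
  constructor
  · have := sum_mul_sq_le_sum_mul_abs univ _ _ hw fun ρ _ =>
      abs_two_mul_probTrue_sub_one_le (restrictedFun ρ f)
    linarith
  · have := sum_mul_abs_le_sqrt_sum_mul_sq univ _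
      (fun ρ => 2 * probTrue (restrictedFun ρ f) - 1) hw (sum_restrictionWeight _)
    linarith
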